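/- arXiv:1912.02147 — 5 statements merged into one kernel-verified Lean document; each statement's English description precedes it below -/
import Mathlib

section
/- Let P be a u–v path in the whirl graph contained in G_{≤M} with an edge e ∈ E_M, where u, v ∈ V_{M−1}, and let x < y be the two consecutive elements of V_{M−1} bounding an interval [x, y] containing both endvertices of e. Then P contains the subpath of the Hamilton path G_M between x and y, namely the path (3k/3^M)((3k+2)/3^M)((3k+1)/3^M)((3k+3)/3^M) where x = 3k/3^M. -/
open SimpleGraph

/-- The `n`-th vertex level of the whirl graph: `V_n = {i/3^n : 0 ≤ i ≤ 3^n}`. -/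
def Vn (n : ℕ) : Set ℚ := {q | ∃ i : ℕ, i ≤ 3 ^ n ∧ q = (i : ℚ) / 3 ^ n}

/-- The `n`-th edge level of the whirl graph. -/
def En (n : ℕ) : Set (Sym2 ℚ) :=
  {e | ∃ k : ℕ, k < 3 ^ (n - 1) ∧
    (e = s(((3 * k : ℕ) : ℚ) / 3 ^ n, ((3 * k + 2 : ℕ) : ℚ) / 3 ^ n) ∨
     e = s(((3 * k + 1 : ℕ) : ℚ) / 3 ^ n, ((3 * k + 2 : ℕ) : ℚ) / 3 ^ n) ∨
     e = s(((3 * k + 1 : ℕ) : ℚ) / 3 ^ n, ((3 * k + 3 : ℕ) : ℚ) / 3 ^ n))}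

/-- The vertex set `V = ⋃_{n ≥ 1} V_n` of the whirl graph. -/
def whirlV : Set ℚ := ⋃ n ≥ 1, Vn n

/-- The whirl graph `G`, as a simple graph on `ℚ` with edge set `⋃_{n ≥ 1} E_n`. -/
def whirl : SimpleGraph ℚ := fromEdgeSet (⋃ n ≥ 1, En n)

/-- `G_{≤ n} = (V_n, E_1 ∪ ⋯ ∪ E_n)`. -/
def Gle (n : ℕ) : SimpleGraph ℚ := fromEdgeSet (⋃ k ∈ Set.Icc 1 n, En k)

/-- `G_{≥ n} = (V, ⋃_{k ≥ n} E_k)`. -/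
def Gge (n : ℕ) : SimpleGraph ℚ := fromEdgeSet (⋃ k ≥ n, En k)

/-- Two walks are edge-disjoint if they share no edge. -/
def WalkEdgeDisjoint {V : Type*} {G : SimpleGraph V} {u v : V}
    (p q : G.Walk u v) : Prop :=
  ∀ e, e ∈ p.edges → e ∉ q.edges

/-- Two lists (of supports of paths) traverse their common entries in the same order. -/
def ListCompat {α : Type*} [DecidableEq α] (l₁ l₂ : List α) : Prop :=
  ∀ x y, x ∈ l₁ → y ∈ l₁ → x ∈ l₂ → y ∈ l₂ →
    (l₁.idxOf x ≤ l₁.idxOf y ↔ l₂.idxOf x ≤ l₂.idxOf y)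

/-!
The points `B = (3k+1)/3^M` and `C = (3k+2)/3^M` are not in `V_{M-1}`, so they are interior
vertices of `P`, and in `G_{≤M}` they have only the two neighbours `{C, D}` resp. `{A, B}`
(with `A = 3k/3^M`, `D = (3k+3)/3^M`). An interior vertex of a path lies on two of its edges,
so as soon as `B` or `C` is on `P`, both of its edges are. The edge `e` contains `B` or `C`;
if `B`, then the edge `BC` puts `C` on `P`, and `C` in turn forces `CA`, `CB` and then `BD`.
-/

lemma SimpleGraph.Walk.IsPath.mem_edges_of_neighborSet_subset {V : Type*} {G : SimpleGraph V}
    {u v w x y : V} {p : G.Walk u v} (hp : p.IsPath) (hw : w ∈ p.support) (hwu : w ≠ u)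
    (hwv : w ≠ v) (hN : G.neighborSet w ⊆ {x, y}) : s(w, x) ∈ p.edges ∧ s(w, y) ∈ p.edges := by
  obtain ⟨i, rfl, hi⟩ := Walk.mem_support_iff_exists_getVert.mp hw
  have hi0 : i ≠ 0 := by rintro rfl; exact hwu p.getVert_zero
  have hil : i < p.length := lt_of_le_of_ne hi (by rintro rfl; exact hwv p.getVert_length)
  -- an interior vertex has exactly two neighbours on the path, so they must be `x` and `y`
  have hsub : p.toSubgraph.neighborSet (p.getVert i) ⊆ {x, y} :=
    (p.toSubgraph.neighborSet_subset _).trans hN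
  have heq : p.toSubgraph.neighborSet (p.getVert i) = {x, y} :=
    Set.eq_of_subset_of_ncard_le hsub <| (Set.ncard_insert_le _ _).trans <| by
      simp [hp.ncard_neighborSet_toSubgraph_internal_eq_two hi0 hil]
  have hx : x ∈ p.toSubgraph.neighborSet (p.getVert i) := heq ▸ Set.mem_insert _ _
  have hy : y ∈ p.toSubgraph.neighborSet (p.getVert i) := heq ▸ Set.mem_insert_of_mem _ rfl
  exact ⟨Walk.adj_toSubgraph_iff_mem_edges.mp hx, Walk.adj_toSubgraph_iff_mem_edges.mp hy⟩

lemma eq_mul_pow_sub_of_div_eq {M j a b : ℕ} (hj : j ≤ M) (h : (a : ℚ) / 3 ^ M = b / 3 ^ j) :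
    a = b * 3 ^ (M - j) := by
  rw [div_eq_div_iff (by positivity) (by positivity), ← Nat.sub_add_cancel hj, pow_add,
    ← mul_assoc] at h
  exact_mod_cast mul_right_cancel₀ (by positivity) h

lemma eq_of_div_eq_of_not_dvd {M j a b : ℕ} (hj : j ≤ M) (ha : ¬ 3 ∣ a)
    (h : (a : ℚ) / 3 ^ M = b / 3 ^ j) : j = M ∧ a = b := by
  have key := eq_mul_pow_sub_of_div_eq hj h
  obtain rfl | hlt := hj.eq_or_lt
  · simpa using key
  · exact absurd (key ▸ Dvd.dvd.mul_left (dvd_pow_self 3 (by omega)) b) ha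

lemma div_three_pow_le_iff {M a b : ℕ} : (a : ℚ) / 3 ^ M ≤ b / 3 ^ M ↔ a ≤ b := by
  rw [div_le_div_iff_of_pos_right (by positivity), Nat.cast_le]

lemma div_three_pow_notMem_Vn_pred {M a : ℕ} (hM : 1 ≤ M) (ha : ¬ 3 ∣ a) :
    (a : ℚ) / 3 ^ M ∉ Vn (M - 1) := by
  rintro ⟨i, -, h⟩
  exact absurd (eq_of_div_eq_of_not_dvd (by omega) ha h).1 (by omega)

-- Edges of lower levels have both ends in `V_{M-1}`, so every edge at `a/3^M` comes from `E_M`.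
lemma exists_eq_of_Gle_adj {M a : ℕ} {z : ℚ} (ha : ¬ 3 ∣ a) (h : (Gle M).Adj (a / 3 ^ M) z) :
    ∃ b : ℕ, z = b / 3 ^ M ∧
      (a % 3 = 1 ∧ (b = a + 1 ∨ b = a + 2) ∨ a % 3 = 2 ∧ (b + 2 = a ∨ b + 1 = a)) := by
  rw [Gle, fromEdgeSet_adj] at h
  simp only [Set.mem_iUnion] at h
  obtain ⟨⟨j, ⟨-, hjM⟩, k', -, hc⟩, -⟩ := h
  rcases hc with hc | hc | hc <;> rw [Sym2.eq_iff] at hc <;>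
    rcases hc with ⟨h1, h2⟩ | ⟨h1, h2⟩ <;>
    obtain ⟨rfl, rfl⟩ := eq_of_div_eq_of_not_dvd hjM ha h1 <;> exact ⟨_, h2, by omega⟩

lemma Gle_neighborSet_three_mul_add_one (M k : ℕ) :
    (Gle M).neighborSet (((3 * k + 1 : ℕ) : ℚ) / 3 ^ M) ⊆
      {((3 * k + 2 : ℕ) : ℚ) / 3 ^ M, ((3 * k + 3 : ℕ) : ℚ) / 3 ^ M} := by
  intro z hz
  obtain ⟨b, rfl, hb⟩ := exists_eq_of_Gle_adj (by omega) hz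
  obtain rfl | rfl : b = 3 * k + 2 ∨ b = 3 * k + 3 := by omega
  all_goals simp

lemma Gle_neighborSet_three_mul_add_two (M k : ℕ) :
    (Gle M).neighborSet (((3 * k + 2 : ℕ) : ℚ) / 3 ^ M) ⊆
      {((3 * k : ℕ) : ℚ) / 3 ^ M, ((3 * k + 1 : ℕ) : ℚ) / 3 ^ M} := by
  intro z hz
  obtain ⟨b, rfl, hb⟩ := exists_eq_of_Gle_adj (by omega) hz
  obtain rfl | rfl : b = 3 * k ∨ b = 3 * k + 1 := by omega
  all_goals simp

lemma mem_of_mem_En_of_subset_Icc {M k : ℕ} {e : Sym2 ℚ} (heM : e ∈ En M)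
    (hbound : ∀ z ∈ e, ((3 * k : ℕ) : ℚ) / 3 ^ M ≤ z ∧ z ≤ ((3 * k + 3 : ℕ) : ℚ) / 3 ^ M) :
    ((3 * k + 1 : ℕ) : ℚ) / 3 ^ M ∈ e ∨ ((3 * k + 2 : ℕ) : ℚ) / 3 ^ M ∈ e := by
  obtain ⟨k', -, hc⟩ := heM
  have hmid : ((3 * k' + 1 : ℕ) : ℚ) / 3 ^ M ∈ e ∨ ((3 * k' + 2 : ℕ) : ℚ) / 3 ^ M ∈ e := by
    rcases hc with rfl | rfl | rfl <;> simp
  obtain rfl : k' = k := by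
    rcases hmid with h | h <;> obtain ⟨h1, h2⟩ := hbound _ h <;>
      rw [div_three_pow_le_iff] at h1 h2 <;> omega
  exact hmid

theorem stmt10_general (M : ℕ) (hM : 1 ≤ M) (u v : ℚ)
    (hu : u ∈ Vn (M - 1)) (hv : v ∈ Vn (M - 1))
    (P : (Gle M).Walk u v) (hP : P.IsPath)
    (e : Sym2 ℚ) (he : e ∈ P.edges) (heM : e ∈ En M)
    (k : ℕ)
    (hbound : ∀ z ∈ e, ((3 * k : ℕ) : ℚ) / 3 ^ M ≤ z ∧ z ≤ ((3 * k + 3 : ℕ) : ℚ) / 3 ^ M) :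
    s(((3 * k : ℕ) : ℚ) / 3 ^ M, ((3 * k + 2 : ℕ) : ℚ) / 3 ^ M) ∈ P.edges ∧
    s(((3 * k + 2 : ℕ) : ℚ) / 3 ^ M, ((3 * k + 1 : ℕ) : ℚ) / 3 ^ M) ∈ P.edges ∧
    s(((3 * k + 1 : ℕ) : ℚ) / 3 ^ M, ((3 * k + 3 : ℕ) : ℚ) / 3 ^ M) ∈ P.edges := by
  set A : ℚ := ((3 * k : ℕ) : ℚ) / 3 ^ M
  set B : ℚ := ((3 * k + 1 : ℕ) : ℚ) / 3 ^ M
  set C : ℚ := ((3 * k + 2 : ℕ) : ℚ) / 3 ^ M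
  set D : ℚ := ((3 * k + 3 : ℕ) : ℚ) / 3 ^ M
  have hB : B ∉ Vn (M - 1) := div_three_pow_notMem_Vn_pred hM (by omega)
  have hC : C ∉ Vn (M - 1) := div_three_pow_notMem_Vn_pred hM (by omega)
  have atB : B ∈ P.support → s(B, C) ∈ P.edges ∧ s(B, D) ∈ P.edges := fun h =>
    hP.mem_edges_of_neighborSet_subset h (by rintro rfl; exact hB hu) (by rintro rfl; exact hB hv)
      (Gle_neighborSet_three_mul_add_one M k)
  have atC : C ∈ P.support → s(C, A) ∈ P.edges ∧ s(C, B) ∈ P.edges := fun h =>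
    hP.mem_edges_of_neighborSet_subset h (by rintro rfl; exact hC hu) (by rintro rfl; exact hC hv)
      (Gle_neighborSet_three_mul_add_two M k)
  have hCP : C ∈ P.support := by
    rcases mem_of_mem_En_of_subset_Icc heM hbound with hBe | hCe
    · exact P.snd_mem_support_of_mem_edges (atB (P.mem_support_of_mem_edges he hBe)).1
    · exact P.mem_support_of_mem_edges he hCe
  obtain ⟨hCA, hCB⟩ := atC hCP
  exact ⟨Sym2.eq_swap ▸ hCA, hCB, (atB (P.snd_mem_support_of_mem_edges hCB)).2⟩

/-- If `P ⊆ G_{≤M}` is a `u`–`v` path with `u, v ∈ V_{M-1}` having an edge `e ∈ E_M`, and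
`x = 3k/3^M < y = (3k+3)/3^M` are the consecutive elements of `V_{M-1}` bounding an
interval containing both ends of `e`, then `P` contains the subpath
`(3k/3^M)((3k+2)/3^M)((3k+1)/3^M)((3k+3)/3^M)` of the Hamilton path `G_M`. -/
theorem stmt10 (M : ℕ) (hM : 1 ≤ M) (u v : ℚ)
    (hu : u ∈ Vn (M - 1)) (hv : v ∈ Vn (M - 1))
    (P : (Gle M).Walk u v) (hP : P.IsPath)
    (e : Sym2 ℚ) (he : e ∈ P.edges) (heM : e ∈ En M)
    (k : ℕ) (hk : k < 3 ^ (M - 1))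
    (hbound : ∀ z ∈ e, ((3 * k : ℕ) : ℚ) / 3 ^ M ≤ z ∧ z ≤ ((3 * k + 3 : ℕ) : ℚ) / 3 ^ M) :
    s(((3 * k : ℕ) : ℚ) / 3 ^ M, ((3 * k + 2 : ℕ) : ℚ) / 3 ^ M) ∈ P.edges ∧
    s(((3 * k + 2 : ℕ) : ℚ) / 3 ^ M, ((3 * k + 1 : ℕ) : ℚ) / 3 ^ M) ∈ P.edges ∧
    s(((3 * k + 1 : ℕ) : ℚ) / 3 ^ M, ((3 * k + 3 : ℕ) : ℚ) / 3 ^ M) ∈ P.edges :=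
  stmt10_general M hM u v hu hv P hP e he heM k hbound
end

section
/- For every integer n ≥ 1, the set C*_n of endpoints of intervals in the n-th stage 𝒞_n of the Cantor set construction equals V_n ∩ C, where C is the Cantor set and V_n = {i/3^n : 0 ≤ i ≤ 3^n}. -/
open SimpleGraph

/-- The stages `𝒞_n` of the Cantor set construction, as sets of pairs `(a, b)`
representing closed intervals `[a, b] ⊆ ℚ`. -/
def cantorStage : ℕ → Set (ℚ × ℚ)
  | 0 => {(0, 1)}
  | n + 1 => {p | ∃ q ∈ cantorStage n,
      p = (q.1, q.1 + (q.2 - q.1) / 3) ∨ p = (q.1 + 2 * (q.2 - q.1) / 3, q.2)}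

/-- The (rational points of the) Cantor set `C = ⋂_n ⋃ 𝒞_n`. -/
def cantorSetQ : Set ℚ := ⋂ n, ⋃ p ∈ cantorStage n, Set.Icc p.1 p.2

/-- `C*_n`: the endpoints of the intervals of `𝒞_n`. -/
def Cstar (n : ℕ) : Set ℚ := {x | ∃ p ∈ cantorStage n, x = p.1 ∨ x = p.2}

/-- `E*_n`: the Cantor-derived edges of level `n`. -/
def Estar (n : ℕ) : Set (Sym2 ℚ) :=
  {e | ∃ p ∈ cantorStage (n - 1),
    e = s(p.1, p.1 + 2 * (p.2 - p.1) / 3) ∨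
    e = s(p.1 + (p.2 - p.1) / 3, p.1 + 2 * (p.2 - p.1) / 3) ∨
    e = s(p.1 + (p.2 - p.1) / 3, p.2)}

/-- `M_n`: the middle edges `{a + Δ/3, a + 2Δ/3}` for `[a, a+Δ] ∈ 𝒞_{n-1}`. -/
def Mlevel (n : ℕ) : Set (Sym2 ℚ) :=
  {e | ∃ p ∈ cantorStage (n - 1),
    e = s(p.1 + (p.2 - p.1) / 3, p.1 + 2 * (p.2 - p.1) / 3)}

/-- `C* = ⋃_{n ≥ 1} C*_n`. -/
def CstarU : Set ℚ := ⋃ n ≥ 1, Cstar n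

/-- `E* = ⋃_{n ≥ 1} E*_n`. -/
def EstarU : Set (Sym2 ℚ) := ⋃ n ≥ 1, Estar n

/-- The matching `M = ⋃_{n ≥ 1} M_n`. -/
def MU : Set (Sym2 ℚ) := ⋃ n ≥ 1, Mlevel n

/-- The graph `G* = (C*, E*)`, a subgraph of the whirl graph. -/
noncomputable def Gstar : SimpleGraph ℚ := SimpleGraph.fromEdgeSet EstarU

lemma cantor_struct (n : ℕ) : ∀ p ∈ cantorStage n,
    ∃ j : ℕ, j + 1 ≤ 3 ^ n ∧ p.1 = (j : ℚ) / 3 ^ n ∧ p.2 = ((j : ℚ) + 1) / 3 ^ n := by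
  induction n with
  | zero =>
    intro p hp
    simp only [cantorStage, Set.mem_singleton_iff] at hp
    exact ⟨0, by norm_num, by simp [hp], by simp [hp]⟩
  | succ n ih =>
    intro p hp
    obtain ⟨q, hq, h | h⟩ := hp <;> obtain ⟨j, hj, h1, h2⟩ := ih q hq
    · refine ⟨3 * j, by push_cast; omega, ?_, ?_⟩ <;>
      · rw [h]; simp only [h1, h2]; push_cast; field_simp; ring
    · refine ⟨3 * j + 2, by push_cast; omega, ?_, ?_⟩ <;>
      · rw [h]; simp only [h1, h2]; push_cast; field_simp; ring

lemma cantor_le (n : ℕ) {p : ℚ × ℚ} (hp : p ∈ cantorStage n) : p.1 ≤ p.2 := by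
  obtain ⟨j, hj, h1, h2⟩ := cantor_struct n p hp
  rw [h1, h2]
  gcongr
  linarith

lemma cantor_persistL (n : ℕ) : ∀ k, ∀ p ∈ cantorStage n,
    ∃ r ∈ cantorStage (n + k), r.1 = p.1 := by
  intro k
  induction k with
  | zero => intro p hp; exact ⟨p, hp, rfl⟩
  | succ k ih =>
    intro p hp
    obtain ⟨r, hr, hre⟩ := ih p hp
    exact ⟨(r.1, r.1 + (r.2 - r.1) / 3), ⟨r, hr, Or.inl rfl⟩, hre⟩

lemma cantor_persistR (n : ℕ) : ∀ k, ∀ p ∈ cantorStage n,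
    ∃ r ∈ cantorStage (n + k), r.2 = p.2 := by
  intro k
  induction k with
  | zero => intro p hp; exact ⟨p, hp, rfl⟩
  | succ k ih =>
    intro p hp
    obtain ⟨r, hr, hre⟩ := ih p hp
    exact ⟨(r.1 + 2 * (r.2 - r.1) / 3, r.2), ⟨r, hr, Or.inr rfl⟩, hre⟩

lemma cantor_nest (m : ℕ) : ∀ k, ∀ p ∈ cantorStage (m + k),
    ∃ r ∈ cantorStage m, r.1 ≤ p.1 ∧ p.2 ≤ r.2 := by
  intro k
  induction k with
  | zero => intro p hp; exact ⟨p, hp, le_refl _, le_refl _⟩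
  | succ k ih =>
    intro p hp
    obtain ⟨q, hq, h | h⟩ := hp
    all_goals {
      obtain ⟨r, hr, hr1, hr2⟩ := ih q hq
      have hle := cantor_le _ hq
      refine ⟨r, hr, ?_, ?_⟩ <;> rw [h] <;> dsimp <;> linarith }

/-- For `n ≥ 1`, the endpoints of the intervals of `𝒞_n` are exactly `V_n ∩ C`. -/
theorem stmt12 (n : ℕ) (hn : 1 ≤ n) : Cstar n = Vn n ∩ cantorSetQ := by
  ext x
  constructor
  · rintro ⟨p, hp, hx⟩
    obtain ⟨j, hj, h1, h2⟩ := cantor_struct n p hp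
    constructor
    · rcases hx with rfl | rfl
      · exact ⟨j, by omega, h1⟩
      · exact ⟨j + 1, by exact_mod_cast hj, by rw [h2]; push_cast; ring⟩
    · intro S hS
      simp only [Set.mem_range] at hS
      obtain ⟨m, rfl⟩ := hS
      simp only [Set.mem_iUnion]
      rcases le_or_gt m n with hm | hm
      · obtain ⟨k, rfl⟩ := Nat.exists_eq_add_of_le hm
        obtain ⟨r, hr, hr1, hr2⟩ := cantor_nest m k p hp
        refine ⟨r, hr, ?_, ?_⟩
        · rcases hx with rfl | rfl
          · exact hr1
          · exact le_trans hr1 (cantor_le _ hp)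
        · rcases hx with rfl | rfl
          · exact le_trans (cantor_le _ hp) hr2
          · exact hr2
      · obtain ⟨k, rfl⟩ := Nat.exists_eq_add_of_le hm.le
        rcases hx with rfl | rfl
        · obtain ⟨r, hr, hre⟩ := cantor_persistL n k p hp
          exact ⟨r, hr, hre.le, hre ▸ cantor_le _ hr⟩
        · obtain ⟨r, hr, hre⟩ := cantor_persistR n k p hp
          exact ⟨r, hr, hre ▸ cantor_le _ hr, hre.ge⟩
  · rintro ⟨⟨i, hi, rfl⟩, hC⟩
    have hmem := hC
    rw [cantorSetQ] at hmem
    have := Set.mem_iInter.mp hmem n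
    simp only [Set.mem_iUnion] at this
    obtain ⟨p, hp, hx1, hx2⟩ := this
    obtain ⟨j, hj, h1, h2⟩ := cantor_struct n p hp
    rw [h1] at hx1; rw [h2] at hx2
    have h3 : (0:ℚ) < 3 ^ n := by positivity
    have hji : (j : ℚ) ≤ i := by
      have := (div_le_div_iff₀ h3 h3).mp (by exact hx1)
      nlinarith
    have hij : (i : ℚ) ≤ (j : ℚ) + 1 := by
      have := (div_le_div_iff₀ h3 h3).mp (by exact hx2)
      nlinarith
    have hji' : j ≤ i := by exact_mod_cast hji
    have hij' : i ≤ j + 1 := by exact_mod_cast hij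
    have : i = j ∨ i = j + 1 := by omega
    rcases this with rfl | rfl
    · exact ⟨p, hp, Or.inl (by rw [h1])⟩
    · exact ⟨p, hp, Or.inr (by rw [h2]; push_cast; ring)⟩
end

section
/- The set M_n = {{a+Δ/3, a+2Δ/3} : [a, a+Δ] ∈ 𝒞_{n−1}}, for n ≥ 1, forms an independent set of edges (a matching) in the subgraph G* = (C*, E*) of the whirl graph, and moreover M = ⋃_{n≥1} M_n is a matching in G*. -/
open SimpleGraph

/-!
Every interval of `𝒞_n` is `[k/3^n, (k+1)/3^n]`, so the endpoints of the edges of `M_{n+1}` are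
exactly the fractions `a/3^(n+1)` with `3 ∤ a`, and `a/3 = k` recovers the interval. A fraction
written with a numerator prime to `3` determines its exponent and numerator, so a shared endpoint
forces two edges of `M` to have the same level and the same interval.
-/

theorem le_of_mul_pow_eq_mul_pow {p a b m n : ℕ} (hp : p ≠ 0) (hb : ¬ p ∣ b)
    (h : a * p ^ n = b * p ^ m) : n ≤ m := by
  by_contra! hlt
  have hpow : a * p ^ (n - m) * p ^ m = b * p ^ m := by
    rwa [mul_assoc, ← pow_add, Nat.sub_add_cancel hlt.le]
  have hab : a * p ^ (n - m) = b := Nat.eq_of_mul_eq_mul_right (by positivity) hpow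
  exact hb (hab ▸ Dvd.dvd.mul_left (dvd_pow_self p (by omega)) a)

theorem eq_of_div_pow_eq_div_pow {p a b m n : ℕ} (hp : p ≠ 0) (ha : ¬ p ∣ a) (hb : ¬ p ∣ b)
    (h : (a : ℚ) / p ^ m = b / p ^ n) : m = n ∧ a = b := by
  rw [div_eq_div_iff (by positivity) (by positivity)] at h
  have h' : a * p ^ n = b * p ^ m := by exact_mod_cast h
  have hmn : m = n :=
    le_antisymm (le_of_mul_pow_eq_mul_pow hp ha h'.symm) (le_of_mul_pow_eq_mul_pow hp hb h')
  subst hmn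
  exact ⟨rfl, Nat.eq_of_mul_eq_mul_right (by positivity) h'⟩

theorem exists_eq_of_mem_cantorStage {n : ℕ} {p : ℚ × ℚ} (hp : p ∈ cantorStage n) :
    ∃ k : ℕ, p = ((k : ℚ) / 3 ^ n, ((k + 1 : ℕ) : ℚ) / 3 ^ n) := by
  induction n generalizing p with
  | zero => exact ⟨0, by simpa [cantorStage] using hp⟩
  | succ n ih =>
    obtain ⟨q, hq, hleft | hright⟩ := hp
    all_goals obtain ⟨k, rfl⟩ := ih hq
    · exact ⟨3 * k, by rw [hleft, Prod.mk.injEq]; constructor <;> (push_cast; field_simp; ring)⟩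
    · exact ⟨3 * k + 2, by rw [hright, Prod.mk.injEq]; constructor <;> (push_cast; field_simp; ring)⟩

/-- The edge of `M_{n+1}` coming from the `k`-th interval `[k/3^n, (k+1)/3^n]` of `𝒞_n`. -/
def middleEdge (n k : ℕ) : Sym2 ℚ :=
  s(((3 * k + 1 : ℕ) : ℚ) / 3 ^ (n + 1), ((3 * k + 2 : ℕ) : ℚ) / 3 ^ (n + 1))

theorem exists_eq_middleEdge_of_mem_Mlevel {n : ℕ} {e : Sym2 ℚ} (he : e ∈ Mlevel (n + 1)) :
    ∃ k, e = middleEdge n k := by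
  obtain ⟨p, hp, rfl⟩ := he
  obtain ⟨k, rfl⟩ := exists_eq_of_mem_cantorStage hp
  refine ⟨k, congrArg₂ (fun x y => s(x, y)) ?_ ?_⟩ <;> (push_cast; field_simp; ring)

theorem exists_eq_of_mem_middleEdge {n k : ℕ} {z : ℚ} (hz : z ∈ middleEdge n k) :
    ∃ a : ℕ, ¬ 3 ∣ a ∧ a / 3 = k ∧ z = a / 3 ^ (n + 1) := by
  rcases Sym2.mem_iff.mp hz with rfl | rfl
  · exact ⟨3 * k + 1, by omega, by omega, by push_cast; rfl⟩
  · exact ⟨3 * k + 2, by omega, by omega, by push_cast; rfl⟩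

theorem middleEdge_not_isDiag (n k : ℕ) : ¬ (middleEdge n k).IsDiag := by
  intro hdiag
  have := (eq_of_div_pow_eq_div_pow (p := 3) (by norm_num) (by omega) (by omega)
    (Sym2.mk_isDiag_iff.mp hdiag)).2
  omega

theorem middleEdge_eq_of_mem_of_mem {m n k l : ℕ} {z : ℚ}
    (hm : z ∈ middleEdge m k) (hn : z ∈ middleEdge n l) : middleEdge m k = middleEdge n l := by
  obtain ⟨a, ha, rfl, rfl⟩ := exists_eq_of_mem_middleEdge hm
  obtain ⟨b, hb, rfl, hab⟩ := exists_eq_of_mem_middleEdge hn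
  obtain ⟨hmn, rfl⟩ := eq_of_div_pow_eq_div_pow (p := 3) (by norm_num) ha hb
    (by exact_mod_cast hab)
  rw [Nat.succ_injective hmn]

theorem exists_eq_middleEdge_of_mem_MU {e : Sym2 ℚ} (he : e ∈ MU) :
    ∃ n k, e ∈ Mlevel (n + 1) ∧ e = middleEdge n k := by
  obtain ⟨n, hn, he⟩ : ∃ n, 1 ≤ n ∧ e ∈ Mlevel n := by simpa [MU] using he
  obtain ⟨n, rfl⟩ := Nat.exists_eq_add_of_le' hn
  exact ⟨n, exists_eq_middleEdge_of_mem_Mlevel he |>.imp fun _ h => ⟨he, h⟩⟩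

theorem MU_subset_edgeSet : MU ⊆ Gstar.edgeSet := by
  intro e he
  obtain ⟨n, k, he, rfl⟩ := exists_eq_middleEdge_of_mem_MU he
  rw [Gstar, edgeSet_fromEdgeSet]
  obtain ⟨p, hp, hpe⟩ := he
  exact ⟨Set.mem_biUnion (Nat.le_add_left 1 n) ⟨p, hp, .inr (.inl hpe)⟩,
    middleEdge_not_isDiag n k⟩

theorem MU_pairwise_disjoint : MU.Pairwise fun e f => ∀ z : ℚ, z ∈ e → z ∉ f := by
  intro e he f hf hef z hze hzf
  obtain ⟨m, k, -, rfl⟩ := exists_eq_middleEdge_of_mem_MU he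
  obtain ⟨n, l, -, rfl⟩ := exists_eq_middleEdge_of_mem_MU hf
  exact hef (middleEdge_eq_of_mem_of_mem hze hzf)

/-- Each `M_n` (`n ≥ 1`) is a set of edges of `G* = (C*, E*)` forming a matching, and
`M = ⋃_{n ≥ 1} M_n` is a matching in `G*` as well. -/
theorem stmt14 :
    (∀ n, 1 ≤ n → Mlevel n ⊆ Gstar.edgeSet) ∧
    (∀ n, 1 ≤ n → (Mlevel n).Pairwise fun e f => ∀ z : ℚ, z ∈ e → z ∉ f) ∧
    MU ⊆ Gstar.edgeSet ∧
    MU.Pairwise fun e f => ∀ z : ℚ, z ∈ e → z ∉ f := by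
  have hMlevel : ∀ n, 1 ≤ n → Mlevel n ⊆ MU := fun n hn => Set.subset_biUnion_of_mem hn
  exact ⟨fun n hn => (hMlevel n hn).trans MU_subset_edgeSet,
    fun n hn => MU_pairwise_disjoint.mono (hMlevel n hn), MU_subset_edgeSet, MU_pairwise_disjoint⟩
end

section
/- The contraction minor G*/M of the graph G* = (C*, E*) by the matching M is isomorphic to the halved Farey graph minus its initial edge, F̌ − E(F̌_0), via an isomorphism associating the vertices 0 and 1 of G* with the two vertices of F̌_0. -/
open SimpleGraph

/-- The blue edges of the halved Farey graph `F̌_n` of order `n`. In the standard concrete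
model of the recursive construction, the vertices of `F̌_n` are the dyadic rationals
`i/2^n` in `[0,1]`; the new vertex added for a blue edge `{i/2^n, (i+1)/2^n}` is its
midpoint, so the blue edges of `F̌_n` are the pairs of consecutive points of step `2^{-n}`. -/
def blueEdges (n : ℕ) : Set (Sym2 ℚ) :=
  {e | ∃ i : ℕ, i < 2 ^ n ∧ e = s((i : ℚ) / 2 ^ n, ((i + 1 : ℕ) : ℚ) / 2 ^ n)}

/-- The vertex set of the halved Farey graph `F̌_n` of order `n`. -/
def FVn (n : ℕ) : Set ℚ := {q | ∃ i : ℕ, i ≤ 2 ^ n ∧ q = (i : ℚ) / 2 ^ n}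

/-- The halved Farey graph `F̌_n` of order `n` (its blue edges are `blueEdges n`,
its black edges are those of the previous orders). -/
def halvedFareyN (n : ℕ) : SimpleGraph ℚ :=
  SimpleGraph.fromEdgeSet (⋃ k ∈ Set.Iic n, blueEdges k)

/-- The halved Farey graph `F̌ = ⋃_n F̌_n` (edge-colourings forgotten). -/
def halvedFarey : SimpleGraph ℚ :=
  SimpleGraph.fromEdgeSet (⋃ n, blueEdges n)

/-- Representative function for contracting a matching `D`: each edge of `D` is
contracted onto its smaller endpoint. -/
noncomputable def repFun (D : Set (Sym2 ℚ)) (x : ℚ) : ℚ :=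
  letI := Classical.propDecidable
  if h : ∃ y, y < x ∧ s(x, y) ∈ D then h.choose else x

/-- Contraction `H/D` of a matching `D` in a graph `H` on `ℚ`: every edge of `D` is
contracted to a single vertex (its smaller endpoint), so all branch sets have size at
most two. -/
noncomputable def contractMatching (H : SimpleGraph ℚ) (D : Set (Sym2 ℚ)) :
    SimpleGraph ℚ :=
  SimpleGraph.fromEdgeSet
    {e | ∃ a b, H.Adj a b ∧ repFun D a ≠ repFun D b ∧ e = s(repFun D a, repFun D b)}


/-- digits: head is the deepest choice. -/
def mval : List Bool → ℕ
  | [] => 0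
  | d :: l => 3 * mval l + (if d then 2 else 0)

def jval : List Bool → ℕ
  | [] => 0
  | d :: l => 2 * jval l + (if d then 1 else 0)

def iv : List Bool → ℚ × ℚ
  | [] => (0, 1)
  | d :: l => if d then ((iv l).1 + 2 * ((iv l).2 - (iv l).1) / 3, (iv l).2)
              else ((iv l).1, (iv l).1 + ((iv l).2 - (iv l).1) / 3)

def dv : List Bool → ℚ × ℚ
  | [] => (0, 1)
  | d :: l => if d then (((dv l).1 + (dv l).2) / 2, (dv l).2)
              else ((dv l).1, ((dv l).1 + (dv l).2) / 2)

lemma mval_lt (l : List Bool) : mval l < 3 ^ l.length := by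
  induction l with
  | nil => simp [mval]
  | cons d l ih =>
      simp only [mval, List.length_cons, pow_succ]
      cases d <;> simp <;> omega

lemma jval_lt (l : List Bool) : jval l < 2 ^ l.length := by
  induction l with
  | nil => simp [jval]
  | cons d l ih =>
      simp only [jval, List.length_cons, pow_succ]
      cases d <;> simp <;> omega

lemma iv_eq (l : List Bool) :
    iv l = ((mval l : ℚ) / 3 ^ l.length, ((mval l : ℚ) + 1) / 3 ^ l.length) := by
  induction l with
  | nil => simp [iv, mval]
  | cons d l ih =>
      cases d <;>
        simp only [iv, mval, ih, if_true, if_false, Bool.false_eq_true, List.length_cons] <;>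
        refine Prod.ext ?_ ?_ <;> push_cast <;> field_simp <;> ring

lemma dv_eq (l : List Bool) :
    dv l = ((jval l : ℚ) / 2 ^ l.length, ((jval l : ℚ) + 1) / 2 ^ l.length) := by
  induction l with
  | nil => simp [dv, jval]
  | cons d l ih =>
      cases d <;>
        simp only [dv, jval, ih, if_true, if_false, Bool.false_eq_true, List.length_cons] <;>
        refine Prod.ext ?_ ?_ <;> push_cast <;> field_simp <;> ring

lemma mval_inj : ∀ l l' : List Bool, l.length = l'.length → mval l = mval l' → l = l'
  | [], [], _, _ => rfl
  | d :: l, d' :: l', hlen, hm => by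
      simp only [List.length_cons, Nat.succ_inj] at hlen
      have hd : d = d' := by
        cases d <;> cases d' <;> simp [mval] at hm ⊢ <;> omega
      subst hd
      have : mval l = mval l' := by cases d <;> simp [mval] at hm <;> omega
      rw [mval_inj l l' hlen this]

lemma jval_inj : ∀ l l' : List Bool, l.length = l'.length → jval l = jval l' → l = l'
  | [], [], _, _ => rfl
  | d :: l, d' :: l', hlen, hm => by
      simp only [List.length_cons, Nat.succ_inj] at hlen
      have hd : d = d' := by
        cases d <;> cases d' <;> simp [jval] at hm ⊢ <;> omega
      subst hd
      have : jval l = jval l' := by cases d <;> simp [jval] at hm <;> omega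
      rw [jval_inj l l' hlen this]

lemma jval_surj : ∀ n j : ℕ, j < 2 ^ n → ∃ l : List Bool, l.length = n ∧ jval l = j
  | 0, j, h => ⟨[], rfl, by simpa [jval] using (by omega : j = 0).symm⟩
  | n + 1, j, h => by
      obtain ⟨l, hl, hj⟩ := jval_surj n (j / 2) (by omega)
      exact ⟨(j % 2 = 1 : Bool) :: l, by simp [hl], by
        simp only [jval, hj]
        rcases Nat.even_or_odd j with he | ho
        · have : j % 2 = 0 := Nat.even_iff.mp he
          simp [this]; omega
        · have : j % 2 = 1 := Nat.odd_iff.mp ho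
          simp [this]; omega⟩

/-- uniqueness of the representation p/3^k with 3 ∤ p. -/
lemma pow3_inj {p q k j : ℕ} (hp : ¬ 3 ∣ p) (hq : ¬ 3 ∣ q)
    (h : (p : ℚ) / 3 ^ k = (q : ℚ) / 3 ^ j) : p = q ∧ k = j := by
  have h3k : ((3 : ℚ) ^ k) ≠ 0 := by positivity
  have h3j : ((3 : ℚ) ^ j) ≠ 0 := by positivity
  rw [div_eq_div_iff h3k h3j] at h
  have hN : p * 3 ^ j = q * 3 ^ k := by exact_mod_cast h
  rcases le_total k j with hle | hle
  · obtain ⟨d, rfl⟩ := Nat.exists_eq_add_of_le hle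
    rw [pow_add, ← mul_assoc] at hN
    have hN' : p * 3 ^ d * 3 ^ k = q * 3 ^ k := by rw [mul_right_comm]; exact hN
    have := Nat.eq_of_mul_eq_mul_right (by positivity : 0 < 3 ^ k) hN'
    rcases Nat.eq_zero_or_pos d with rfl | hd
    · simp at this; omega
    · exfalso; apply hq
      rw [← this]
      exact Dvd.dvd.mul_left (dvd_pow_self 3 (by omega)) p
  · obtain ⟨d, rfl⟩ := Nat.exists_eq_add_of_le hle
    rw [pow_add, ← mul_assoc] at hN
    have hN' : q * 3 ^ d * 3 ^ j = p * 3 ^ j := by rw [mul_right_comm]; exact hN.symm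
    have := Nat.eq_of_mul_eq_mul_right (by positivity : 0 < 3 ^ j) hN'
    rcases Nat.eq_zero_or_pos d with rfl | hd
    · simp at this; omega
    · exfalso; apply hp
      rw [← this]
      exact Dvd.dvd.mul_left (dvd_pow_self 3 (by omega)) q

lemma pow23_ne {p q k j : ℕ} (hp : ¬ 3 ∣ p) (hk : 1 ≤ k) :
    (p : ℚ) / 3 ^ k ≠ (q : ℚ) / 2 ^ j := by
  intro h
  have h3k : ((3 : ℚ) ^ k) ≠ 0 := by positivity
  have h2j : ((2 : ℚ) ^ j) ≠ 0 := by positivity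
  rw [div_eq_div_iff h3k h2j] at h
  have hN : p * 2 ^ j = q * 3 ^ k := by exact_mod_cast h
  have h3 : (3 : ℕ) ∣ p * 2 ^ j := hN ▸ Dvd.dvd.mul_left (dvd_pow_self 3 (by omega)) q
  rcases (Nat.Prime.dvd_mul (by norm_num)).mp h3 with h | h
  · exact hp h
  · have := Nat.Prime.dvd_of_dvd_pow (by norm_num : Nat.Prime 3) h
    omega

/-- The left gap point of the interval `iv l`. -/
def gpt (l : List Bool) : ℚ := (3 * mval l + 1 : ℕ) / 3 ^ (l.length + 1)

/-- The right gap point. -/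
def g2pt (l : List Bool) : ℚ := (3 * mval l + 2 : ℕ) / 3 ^ (l.length + 1)

/-- The midpoint of the dyadic interval `dv l`. -/
def mdpt (l : List Bool) : ℚ := (2 * jval l + 1 : ℕ) / 2 ^ (l.length + 1)

lemma gpt_inj {l l' : List Bool} (h : gpt l = gpt l') : l = l' := by
  obtain ⟨h1, h2⟩ := pow3_inj (p := 3 * mval l + 1) (q := 3 * mval l' + 1)
    (by omega) (by omega) h
  exact mval_inj l l' (by omega) (by omega)

lemma g2pt_inj {l l' : List Bool} (h : g2pt l = g2pt l') : l = l' := by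
  obtain ⟨h1, h2⟩ := pow3_inj (p := 3 * mval l + 2) (q := 3 * mval l' + 2)
    (by omega) (by omega) h
  exact mval_inj l l' (by omega) (by omega)

lemma pow2_inj {p q k j : ℕ} (hp : ¬ 2 ∣ p) (hq : ¬ 2 ∣ q)
    (h : (p : ℚ) / 2 ^ k = (q : ℚ) / 2 ^ j) : p = q ∧ k = j := by
  have h2k : ((2 : ℚ) ^ k) ≠ 0 := by positivity
  have h2j : ((2 : ℚ) ^ j) ≠ 0 := by positivity
  rw [div_eq_div_iff h2k h2j] at h
  have hN : p * 2 ^ j = q * 2 ^ k := by exact_mod_cast h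
  rcases le_total k j with hle | hle
  · obtain ⟨d, rfl⟩ := Nat.exists_eq_add_of_le hle
    rw [pow_add, ← mul_assoc] at hN
    have hN' : p * 2 ^ d * 2 ^ k = q * 2 ^ k := by rw [mul_right_comm]; exact hN
    have := Nat.eq_of_mul_eq_mul_right (by positivity : 0 < 2 ^ k) hN'
    rcases Nat.eq_zero_or_pos d with rfl | hd
    · simp at this; omega
    · exfalso; apply hq
      rw [← this]
      exact Dvd.dvd.mul_left (dvd_pow_self 2 (by omega)) p
  · obtain ⟨d, rfl⟩ := Nat.exists_eq_add_of_le hle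
    rw [pow_add, ← mul_assoc] at hN
    have hN' : q * 2 ^ d * 2 ^ j = p * 2 ^ j := by rw [mul_right_comm]; exact hN.symm
    have := Nat.eq_of_mul_eq_mul_right (by positivity : 0 < 2 ^ j) hN'
    rcases Nat.eq_zero_or_pos d with rfl | hd
    · simp at this; omega
    · exfalso; apply hp
      rw [← this]
      exact Dvd.dvd.mul_left (dvd_pow_self 2 (by omega)) q

lemma mdpt_inj {l l' : List Bool} (h : mdpt l = mdpt l') : l = l' := by
  obtain ⟨h1, h2⟩ := pow2_inj (p := 2 * jval l + 1) (q := 2 * jval l' + 1)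
    (by omega) (by omega) h
  exact jval_inj l l' (by omega) (by omega)

lemma gpt_ne_g2pt (l l' : List Bool) : gpt l ≠ g2pt l' := by
  intro h
  obtain ⟨h1, _⟩ := pow3_inj (p := 3 * mval l + 1) (q := 3 * mval l' + 2)
    (by omega) (by omega) h
  omega

lemma gpt_ne_mdpt (l l' : List Bool) : gpt l ≠ mdpt l' :=
  pow23_ne (by omega) (by omega)

lemma g2pt_ne_mdpt (l l' : List Bool) : g2pt l ≠ mdpt l' :=
  pow23_ne (by omega) (by omega)

lemma gpt_pos (l : List Bool) : 0 < gpt l := by unfold gpt; positivity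
lemma g2pt_pos (l : List Bool) : 0 < g2pt l := by unfold g2pt; positivity
lemma mdpt_pos (l : List Bool) : 0 < mdpt l := by unfold mdpt; positivity

lemma gpt_lt_one (l : List Bool) : gpt l < 1 := by
  unfold gpt
  rw [div_lt_one (by positivity)]
  have := mval_lt l
  have : (3 * mval l + 1 : ℕ) < 3 ^ (l.length + 1) := by
    rw [pow_succ]; omega
  exact_mod_cast this

lemma g2pt_lt_one (l : List Bool) : g2pt l < 1 := by
  unfold g2pt
  rw [div_lt_one (by positivity)]
  have := mval_lt l
  have : (3 * mval l + 2 : ℕ) < 3 ^ (l.length + 1) := by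
    rw [pow_succ]; omega
  exact_mod_cast this

lemma mdpt_lt_one (l : List Bool) : mdpt l < 1 := by
  unfold mdpt
  rw [div_lt_one (by positivity)]
  have := jval_lt l
  have : (2 * jval l + 1 : ℕ) < 2 ^ (l.length + 1) := by
    rw [pow_succ]; omega
  exact_mod_cast this

lemma gpt_lt_g2pt (l : List Bool) : gpt l < g2pt l := by
  unfold gpt g2pt
  have : ((3 * mval l + 1 : ℕ) : ℚ) < ((3 * mval l + 2 : ℕ) : ℚ) := by
    exact_mod_cast (by omega : 3 * mval l + 1 < 3 * mval l + 2)
  exact div_lt_div_of_pos_right this (by positivity)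

/-- left-endpoint representative after contraction -/
def RA : List Bool → ℚ
  | [] => 0
  | false :: l => RA l
  | true :: l => gpt l

/-- right-endpoint representative after contraction -/
def RB : List Bool → ℚ
  | [] => 1
  | true :: l => RB l
  | false :: l => gpt l

/-- `cantorStage` intervals are exactly the `iv l`. -/
lemma mem_cantorStage (n : ℕ) (p : ℚ × ℚ) :
    p ∈ cantorStage n ↔ ∃ l : List Bool, l.length = n ∧ p = iv l := by
  induction n generalizing p with
  | zero =>
      constructor
      · intro h; exact ⟨[], rfl, by simpa [cantorStage, iv] using h⟩
      · rintro ⟨l, hl, rfl⟩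
        rw [List.length_eq_zero_iff] at hl
        subst hl; simp [cantorStage, iv]
  | succ n ih =>
      constructor
      · rintro ⟨q, hq, hp⟩
        obtain ⟨l, hl, rfl⟩ := (ih q).mp hq
        rcases hp with h | h
        · exact ⟨false :: l, by simp [hl], by simp [iv, h]⟩
        · exact ⟨true :: l, by simp [hl], by simp [iv, h]⟩
      · rintro ⟨l, hl, rfl⟩
        match l, hl with
        | d :: l, hl =>
          refine ⟨iv l, (ih _).mpr ⟨l, by simpa using hl, rfl⟩, ?_⟩
          cases d
          · left; simp [iv]
          · right; simp [iv]

lemma iv_fst (l : List Bool) : (iv l).1 = (mval l : ℚ) / 3 ^ l.length := by rw [iv_eq]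
lemma iv_snd (l : List Bool) : (iv l).2 = ((mval l : ℚ) + 1) / 3 ^ l.length := by rw [iv_eq]

lemma gpt_form (l : List Bool) : (iv l).1 + ((iv l).2 - (iv l).1) / 3 = gpt l := by
  rw [iv_fst, iv_snd]
  unfold gpt
  push_cast
  rw [pow_succ]
  field_simp
  ring

lemma g2pt_form (l : List Bool) : (iv l).1 + 2 * ((iv l).2 - (iv l).1) / 3 = g2pt l := by
  rw [iv_fst, iv_snd]
  unfold g2pt
  push_cast
  rw [pow_succ]
  field_simp
  ring

/-- Characterization of the edges of `G*`. -/
lemma mem_EstarU (e : Sym2 ℚ) :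
    e ∈ EstarU ↔ ∃ l : List Bool,
      e = s((iv l).1, g2pt l) ∨ e = s(gpt l, g2pt l) ∨ e = s(gpt l, (iv l).2) := by
  constructor
  · intro h
    simp only [EstarU, Set.mem_iUnion] at h
    obtain ⟨n, hn, h⟩ := h
    obtain ⟨p, hp, h⟩ := h
    obtain ⟨l, -, rfl⟩ := (mem_cantorStage _ p).mp hp
    exact ⟨l, by rwa [gpt_form, g2pt_form] at h⟩
  · rintro ⟨l, h⟩
    simp only [EstarU, Set.mem_iUnion]
    refine ⟨l.length + 1, by omega, ?_⟩
    refine ⟨iv l, ?_, ?_⟩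
    · exact (mem_cantorStage _ _).mpr ⟨l, by simp, rfl⟩
    · rwa [gpt_form, g2pt_form]

/-- Characterization of the matching `M`. -/
lemma mem_MU (e : Sym2 ℚ) :
    e ∈ MU ↔ ∃ l : List Bool, e = s(gpt l, g2pt l) := by
  constructor
  · intro h
    simp only [MU, Set.mem_iUnion] at h
    obtain ⟨n, hn, p, hp, h⟩ := h
    obtain ⟨l, -, rfl⟩ := (mem_cantorStage _ p).mp hp
    exact ⟨l, by rwa [gpt_form, g2pt_form] at h⟩
  · rintro ⟨l, h⟩
    simp only [MU, Set.mem_iUnion]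
    refine ⟨l.length + 1, by omega, iv l, (mem_cantorStage _ _).mpr ⟨l, by simp, rfl⟩, ?_⟩
    rwa [gpt_form, g2pt_form]

lemma mu_edge_cases {x y : ℚ} (h : s(x, y) ∈ MU) :
    ∃ l, (x = gpt l ∧ y = g2pt l) ∨ (x = g2pt l ∧ y = gpt l) := by
  obtain ⟨l, hl⟩ := (mem_MU _).mp h
  rw [Sym2.eq_iff] at hl
  exact ⟨l, hl⟩

lemma repFun_of_not {x : ℚ} (hx : ¬ ∃ y, y < x ∧ s(x, y) ∈ MU) : repFun MU x = x := by
  unfold repFun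
  exact dif_neg hx

lemma repFun_gpt (l : List Bool) : repFun MU (gpt l) = gpt l := by
  apply repFun_of_not
  rintro ⟨y, hy, hmem⟩
  obtain ⟨l', h | h⟩ := mu_edge_cases hmem
  · obtain ⟨h1, h2⟩ := h
    have := gpt_inj h1
    subst this
    rw [h2] at hy
    exact absurd hy (not_lt.mpr (gpt_lt_g2pt l).le)
  · exact gpt_ne_g2pt l l' h.1

lemma repFun_g2pt (l : List Bool) : repFun MU (g2pt l) = gpt l := by
  have hc : ∃ y, y < g2pt l ∧ s(g2pt l, y) ∈ MU :=
    ⟨gpt l, gpt_lt_g2pt l, by rw [Sym2.eq_swap]; exact (mem_MU _).mpr ⟨l, rfl⟩⟩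
  unfold repFun
  rw [dif_pos hc]
  obtain ⟨hy, hmem⟩ := hc.choose_spec
  obtain ⟨l', h | h⟩ := mu_edge_cases hmem
  · exact absurd h.1.symm (gpt_ne_g2pt l' l)
  · obtain ⟨h1, h2⟩ := h
    have := g2pt_inj h1
    subst this
    exact h2

lemma repFun_zero : repFun MU 0 = 0 := by
  apply repFun_of_not
  rintro ⟨y, hy, hmem⟩
  obtain ⟨l', h | h⟩ := mu_edge_cases hmem
  · exact absurd h.1.symm (gpt_pos l').ne'
  · exact absurd h.1.symm (g2pt_pos l').ne'

lemma repFun_one : repFun MU 1 = 1 := by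
  apply repFun_of_not
  rintro ⟨y, hy, hmem⟩
  obtain ⟨l', h | h⟩ := mu_edge_cases hmem
  · exact absurd h.1 (gpt_lt_one l').ne'
  · exact absurd h.1 (g2pt_lt_one l').ne'

lemma iv_fst_cons_false (l : List Bool) : (iv (false :: l)).1 = (iv l).1 := by simp [iv]
lemma iv_fst_cons_true (l : List Bool) : (iv (true :: l)).1 = g2pt l := by
  simp [iv, g2pt_form]
lemma iv_snd_cons_true (l : List Bool) : (iv (true :: l)).2 = (iv l).2 := by simp [iv]
lemma iv_snd_cons_false (l : List Bool) : (iv (false :: l)).2 = gpt l := by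
  simp [iv, gpt_form]

lemma rep_fst : ∀ l : List Bool, repFun MU (iv l).1 = RA l
  | [] => by simp [iv, RA, repFun_zero]
  | false :: l => by rw [iv_fst_cons_false, RA]; exact rep_fst l
  | true :: l => by rw [iv_fst_cons_true, RA]; exact repFun_g2pt l

lemma rep_snd : ∀ l : List Bool, repFun MU (iv l).2 = RB l
  | [] => by simp [iv, RB, repFun_one]
  | true :: l => by rw [iv_snd_cons_true, RB]; exact rep_snd l
  | false :: l => by rw [iv_snd_cons_false, RB]; exact repFun_gpt l

lemma RA_cases : ∀ l : List Bool, RA l = 0 ∨ ∃ l', l'.length < l.length ∧ RA l = gpt l'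
  | [] => Or.inl rfl
  | false :: l => by
      rcases RA_cases l with h | ⟨l', hl', h⟩
      · exact Or.inl h
      · exact Or.inr ⟨l', by simpa using Nat.lt_succ_of_lt hl', h⟩
  | true :: l => Or.inr ⟨l, by simp, rfl⟩

lemma RB_cases : ∀ l : List Bool, RB l = 1 ∨ ∃ l', l'.length < l.length ∧ RB l = gpt l'
  | [] => Or.inl rfl
  | true :: l => by
      rcases RB_cases l with h | ⟨l', hl', h⟩
      · exact Or.inl h
      · exact Or.inr ⟨l', by simpa using Nat.lt_succ_of_lt hl', h⟩
  | false :: l => Or.inr ⟨l, by simp, rfl⟩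

lemma RA_ne_gpt (l : List Bool) : RA l ≠ gpt l := by
  rcases RA_cases l with h | ⟨l', hl', h⟩
  · rw [h]; exact (gpt_pos l).ne
  · rw [h]; intro he
    rw [gpt_inj he] at hl'
    omega

lemma RB_ne_gpt (l : List Bool) : RB l ≠ gpt l := by
  rcases RB_cases l with h | ⟨l', hl', h⟩
  · rw [h]; exact (gpt_lt_one l).ne'
  · rw [h]; intro he
    rw [gpt_inj he] at hl'
    omega

lemma fst_lt_gpt (l : List Bool) : (iv l).1 < gpt l := by
  rw [iv_fst]; unfold gpt
  rw [pow_succ]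
  rw [div_lt_div_iff₀ (by positivity) (by positivity)]
  push_cast
  nlinarith [pow_pos (show (0:ℚ) < 3 by norm_num) l.length]

lemma g2pt_lt_snd (l : List Bool) : g2pt l < (iv l).2 := by
  rw [iv_snd]; unfold g2pt
  rw [pow_succ]
  rw [div_lt_div_iff₀ (by positivity) (by positivity)]
  push_cast
  nlinarith [pow_pos (show (0:ℚ) < 3 by norm_num) l.length]

/-- Characterization of the adjacency of `G*/M`. -/
lemma contract_adj (x y : ℚ) :
    (contractMatching Gstar MU).Adj x y ↔ x ≠ y ∧
      ∃ l, s(x, y) = s(RA l, gpt l) ∨ s(x, y) = s(gpt l, RB l) := by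
  rw [contractMatching, fromEdgeSet_adj]
  constructor
  · rintro ⟨hmem, hne⟩
    refine ⟨hne, ?_⟩
    obtain ⟨a, b, hadj, hrep, heq⟩ := hmem
    rw [Gstar, fromEdgeSet_adj] at hadj
    obtain ⟨l, h | h | h⟩ := (mem_EstarU _).mp hadj.1 <;> rw [Sym2.eq_iff] at h
    · refine ⟨l, Or.inl ?_⟩
      rcases h with ⟨rfl, rfl⟩ | ⟨rfl, rfl⟩
      · rw [heq, rep_fst, repFun_g2pt]
      · rw [heq, rep_fst, repFun_g2pt, Sym2.eq_swap]
    · exfalso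
      rcases h with ⟨rfl, rfl⟩ | ⟨rfl, rfl⟩ <;>
        rw [repFun_gpt, repFun_g2pt] at hrep <;> exact hrep rfl
    · refine ⟨l, Or.inr ?_⟩
      rcases h with ⟨rfl, rfl⟩ | ⟨rfl, rfl⟩
      · rw [heq, rep_snd, repFun_gpt]
      · rw [heq, rep_snd, repFun_gpt, Sym2.eq_swap]
  · rintro ⟨hne, l, h | h⟩
    · refine ⟨⟨(iv l).1, g2pt l, ?_, ?_, ?_⟩, hne⟩
      · rw [Gstar, fromEdgeSet_adj]
        exact ⟨(mem_EstarU _).mpr ⟨l, Or.inl rfl⟩,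
          ((fst_lt_gpt l).trans (gpt_lt_g2pt l)).ne⟩
      · rw [rep_fst, repFun_g2pt]; exact RA_ne_gpt l
      · rw [rep_fst, repFun_g2pt]; exact h
    · refine ⟨⟨gpt l, (iv l).2, ?_, ?_, ?_⟩, hne⟩
      · rw [Gstar, fromEdgeSet_adj]
        exact ⟨(mem_EstarU _).mpr ⟨l, Or.inr (Or.inr rfl)⟩,
          ((gpt_lt_g2pt l).trans (g2pt_lt_snd l)).ne⟩
      · rw [repFun_gpt, rep_snd]; exact fun hh => RB_ne_gpt l hh.symm
      · rw [repFun_gpt, rep_snd]; exact h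

lemma dv_fst (l : List Bool) : (dv l).1 = (jval l : ℚ) / 2 ^ l.length := by rw [dv_eq]
lemma dv_snd (l : List Bool) : (dv l).2 = ((jval l : ℚ) + 1) / 2 ^ l.length := by rw [dv_eq]

lemma half_shift (j n : ℕ) : ((j : ℚ)) / 2 ^ n = ((2 * j : ℕ) : ℚ) / 2 ^ (n + 1) := by
  push_cast
  rw [pow_succ]
  field_simp

lemma mdpt_form (l : List Bool) : ((dv l).1 + (dv l).2) / 2 = mdpt l := by
  rw [dv_fst, dv_snd]
  unfold mdpt
  push_cast
  rw [pow_succ]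
  field_simp
  ring

lemma dv_fst_cons_false (l : List Bool) : (dv (false :: l)).1 = (dv l).1 := by simp [dv]
lemma dv_fst_cons_true (l : List Bool) : (dv (true :: l)).1 = mdpt l := by
  simp [dv, mdpt_form]
lemma dv_snd_cons_true (l : List Bool) : (dv (true :: l)).2 = (dv l).2 := by simp [dv]
lemma dv_snd_cons_false (l : List Bool) : (dv (false :: l)).2 = mdpt l := by
  simp [dv, mdpt_form]

lemma mdpt_eq_div (l : List Bool) : mdpt l = ((2 * jval l + 1 : ℕ) : ℚ) / 2 ^ (l.length + 1) := rfl

/-- Characterization of the adjacency of `F̌ - E(F̌₀)`. -/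
lemma target_adj (x y : ℚ) :
    (halvedFarey.deleteEdges {s((0 : ℚ), (1 : ℚ))}).Adj x y ↔ x ≠ y ∧
      ∃ l, s(x, y) = s((dv l).1, mdpt l) ∨ s(x, y) = s(mdpt l, (dv l).2) := by
  rw [deleteEdges_adj, halvedFarey, fromEdgeSet_adj]
  constructor
  · rintro ⟨⟨hmem, hne⟩, hnot⟩
    refine ⟨hne, ?_⟩
    simp only [Set.mem_iUnion, blueEdges, Set.mem_setOf_eq] at hmem
    obtain ⟨n, i, hi, he⟩ := hmem
    match n with
    | 0 =>
        exfalso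
        apply hnot
        have : i = 0 := by omega
        subst this
        simp only [Set.mem_singleton_iff, he]
        norm_num
    | n + 1 =>
        obtain ⟨l, hlen, hj⟩ := jval_surj n (i / 2) (by omega)
        rcases Nat.even_or_odd i with hpar | hpar
        · have hij : 2 * jval l = i := by
            have := Nat.even_iff.mp hpar; omega
          have e1 : (dv l).1 = ((i : ℕ) : ℚ) / 2 ^ (n + 1) := by
            rw [dv_fst, hlen, half_shift, hij]
          have e2 : mdpt l = ((i + 1 : ℕ) : ℚ) / 2 ^ (n + 1) := by
            rw [mdpt_eq_div, hlen, hij]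
          exact ⟨l, Or.inl (by rw [he, e1, e2])⟩
        · have hij : 2 * jval l + 1 = i := by
            have := Nat.odd_iff.mp hpar; omega
          have e1 : mdpt l = ((i : ℕ) : ℚ) / 2 ^ (n + 1) := by
            rw [mdpt_eq_div, hlen, hij]
          have e2 : (dv l).2 = ((i + 1 : ℕ) : ℚ) / 2 ^ (n + 1) := by
            rw [dv_snd, hlen]
            have hc : (jval l : ℚ) + 1 = ((jval l + 1 : ℕ) : ℚ) := by push_cast; ring
            rw [hc, half_shift]
            have : 2 * (jval l + 1) = i + 1 := by omega
            rw [this]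
          exact ⟨l, Or.inr (by rw [he, e1, e2])⟩
  · rintro ⟨hne, l, h | h⟩
    · refine ⟨⟨?_, hne⟩, ?_⟩
      · simp only [Set.mem_iUnion, blueEdges, Set.mem_setOf_eq]
        refine ⟨l.length + 1, 2 * jval l, by have := jval_lt l; rw [pow_succ]; omega, ?_⟩
        have e1 : (dv l).1 = ((2 * jval l : ℕ) : ℚ) / 2 ^ (l.length + 1) := by
          rw [dv_fst, half_shift]
        rw [h, e1, mdpt_eq_div]
      · simp only [Set.mem_singleton_iff, h]
        rw [Sym2.eq_iff]
        rintro (⟨-, h2⟩ | ⟨-, h2⟩)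
        · exact (mdpt_lt_one l).ne h2
        · exact (mdpt_pos l).ne' h2
    · refine ⟨⟨?_, hne⟩, ?_⟩
      · simp only [Set.mem_iUnion, blueEdges, Set.mem_setOf_eq]
        refine ⟨l.length + 1, 2 * jval l + 1, by have := jval_lt l; rw [pow_succ]; omega, ?_⟩
        have e2 : (dv l).2 = ((2 * jval l + 1 + 1 : ℕ) : ℚ) / 2 ^ (l.length + 1) := by
          rw [dv_snd]
          have hc : (jval l : ℚ) + 1 = ((jval l + 1 : ℕ) : ℚ) := by push_cast; ring
          rw [hc, half_shift]
          have : 2 * (jval l + 1) = 2 * jval l + 1 + 1 := by omega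
          rw [this]
        rw [h, e2, mdpt_eq_div]
      · simp only [Set.mem_singleton_iff, h]
        rw [Sym2.eq_iff]
        rintro (⟨h2, -⟩ | ⟨h2, -⟩)
        · exact (mdpt_pos l).ne' h2
        · exact (mdpt_lt_one l).ne h2

/-- The Cantor-function-like involution of `ℚ` swapping gap points and dyadic midpoints. -/
noncomputable def phi (x : ℚ) : ℚ :=
  letI := Classical.propDecidable
  if h : ∃ l, gpt l = x then mdpt h.choose
  else if h : ∃ l, mdpt l = x then gpt h.choose
  else x

lemma phi_gpt (l : List Bool) : phi (gpt l) = mdpt l := by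
  unfold phi
  have h : ∃ l', gpt l' = gpt l := ⟨l, rfl⟩
  rw [dif_pos h, gpt_inj h.choose_spec]

lemma phi_mdpt (l : List Bool) : phi (mdpt l) = gpt l := by
  unfold phi
  have h1 : ¬ ∃ l', gpt l' = mdpt l := by
    rintro ⟨l', hl'⟩; exact gpt_ne_mdpt l' l hl'
  have h : ∃ l', mdpt l' = mdpt l := ⟨l, rfl⟩
  rw [dif_neg h1, dif_pos h, mdpt_inj h.choose_spec]

lemma phi_fix {x : ℚ} (h1 : ¬ ∃ l, gpt l = x) (h2 : ¬ ∃ l, mdpt l = x) : phi x = x := by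
  unfold phi
  rw [dif_neg h1, dif_neg h2]

lemma phi_invol : Function.Involutive phi := by
  intro x
  by_cases h1 : ∃ l, gpt l = x
  · obtain ⟨l, rfl⟩ := h1
    rw [phi_gpt, phi_mdpt]
  · by_cases h2 : ∃ l, mdpt l = x
    · obtain ⟨l, rfl⟩ := h2
      rw [phi_mdpt, phi_gpt]
    · rw [phi_fix h1 h2, phi_fix h1 h2]

lemma phi_zero : phi 0 = 0 :=
  phi_fix (by rintro ⟨l, hl⟩; exact (gpt_pos l).ne' hl)
    (by rintro ⟨l, hl⟩; exact (mdpt_pos l).ne' hl)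

lemma phi_one : phi 1 = 1 :=
  phi_fix (by rintro ⟨l, hl⟩; exact (gpt_lt_one l).ne hl)
    (by rintro ⟨l, hl⟩; exact (mdpt_lt_one l).ne hl)

lemma phi_RA : ∀ l : List Bool, phi (RA l) = (dv l).1
  | [] => by
      show phi 0 = (dv []).1
      rw [phi_zero]; simp [dv]
  | false :: l => by
      show phi (RA l) = (dv (false :: l)).1
      rw [dv_fst_cons_false]; exact phi_RA l
  | true :: l => by
      show phi (gpt l) = (dv (true :: l)).1
      rw [dv_fst_cons_true, phi_gpt]

lemma phi_RB : ∀ l : List Bool, phi (RB l) = (dv l).2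
  | [] => by
      show phi 1 = (dv []).2
      rw [phi_one]; simp [dv]
  | true :: l => by
      show phi (RB l) = (dv (true :: l)).2
      rw [dv_snd_cons_true]; exact phi_RB l
  | false :: l => by
      show phi (gpt l) = (dv (false :: l)).2
      rw [dv_snd_cons_false, phi_gpt]

lemma phi_dv_fst (l : List Bool) : phi ((dv l).1) = RA l := by
  rw [← phi_RA l, phi_invol]

lemma phi_dv_snd (l : List Bool) : phi ((dv l).2) = RB l := by
  rw [← phi_RB l, phi_invol]

lemma phi_inj : Function.Injective phi := phi_invol.injective

lemma main_forward {x y : ℚ} (h : (contractMatching Gstar MU).Adj x y) :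
    (halvedFarey.deleteEdges {s((0 : ℚ), (1 : ℚ))}).Adj (phi x) (phi y) := by
  obtain ⟨hne, l, hc⟩ := (contract_adj x y).mp h
  rw [target_adj]
  refine ⟨fun hh => hne (phi_inj hh), l, ?_⟩
  rcases hc with hc | hc <;> rw [Sym2.eq_iff] at hc
  · left
    rcases hc with ⟨rfl, rfl⟩ | ⟨rfl, rfl⟩
    · rw [phi_RA, phi_gpt]
    · rw [phi_RA, phi_gpt, Sym2.eq_swap]
  · right
    rcases hc with ⟨rfl, rfl⟩ | ⟨rfl, rfl⟩
    · rw [phi_RB, phi_gpt]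
    · rw [phi_RB, phi_gpt, Sym2.eq_swap]

lemma main_backward {x y : ℚ} (h : (halvedFarey.deleteEdges {s((0 : ℚ), (1 : ℚ))}).Adj x y) :
    (contractMatching Gstar MU).Adj (phi x) (phi y) := by
  obtain ⟨hne, l, hc⟩ := (target_adj x y).mp h
  rw [contract_adj]
  refine ⟨fun hh => hne (phi_inj hh), l, ?_⟩
  rcases hc with hc | hc <;> rw [Sym2.eq_iff] at hc
  · left
    rcases hc with ⟨rfl, rfl⟩ | ⟨rfl, rfl⟩
    · rw [phi_dv_fst, phi_mdpt]
    · rw [phi_dv_fst, phi_mdpt, Sym2.eq_swap]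
  · right
    rcases hc with ⟨rfl, rfl⟩ | ⟨rfl, rfl⟩
    · rw [phi_dv_snd, phi_mdpt]
    · rw [phi_dv_snd, phi_mdpt, Sym2.eq_swap]

/-- Lemma 3.1: `G*/M ≅ F̌ − E(F̌_0)` by an isomorphism associating `0` and `1` (the two
unmatched extreme vertices of `G*`) with the two vertices `0`, `1` of `F̌_0`. -/
theorem stmt15 :
    ∃ φ : contractMatching Gstar MU ≃g halvedFarey.deleteEdges {s((0 : ℚ), (1 : ℚ))},
      (φ 0 = 0 ∧ φ 1 = 1) ∨ (φ 0 = 1 ∧ φ 1 = 0) := by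
  refine ⟨⟨⟨phi, phi, phi_invol.leftInverse, phi_invol.rightInverse⟩, ?_⟩,
    Or.inl ⟨phi_zero, phi_one⟩⟩
  intro a b
  constructor
  · intro h
    have := main_backward h
    simpa only [Equiv.coe_fn_mk, phi_invol a, phi_invol b] using this
  · exact main_forward
end

section
/- The images π₁G* and π₂G* of the graph G* under the affine maps π₁(x) = x/9 + 3/9 and π₂(x) = x/9 + 5/9 are subgraphs of the whirl graph G, and they are vertex-disjoint. -/
/-!
Every interval of `𝒞_{n-1}` is `[i/3^{n-1}, (i+1)/3^{n-1}]`, so `C*_n ⊆ V_n` and `E*_n ⊆ E_n`.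
The map `x ↦ (x + c)/9` with `c ≤ 8` sends `j/3^n` to `(j + c·3^n)/3^{n+2}`; hence it maps `V_n`
into `V_{n+2}` and the edge triple of `E_n` with index `k` onto the triple of `E_{n+2}` with index
`k + c·3^{n-1}`. Since `C* ⊆ [0, 1]`, `π₁C* ⊆ [3/9, 4/9]` and `π₂C* ⊆ [5/9, 6/9]` are disjoint.
-/

open SimpleGraph

/-- The affine map `π₁(x) = x/9 + 3/9`. -/
def pi1 (x : ℚ) : ℚ := x / 9 + 3 / 9

/-- The affine map `π₂(x) = x/9 + 5/9`. -/
def pi2 (x : ℚ) : ℚ := x / 9 + 5 / 9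

theorem mem_cantorStage_s19 {n : ℕ} {p : ℚ × ℚ} (hp : p ∈ cantorStage n) :
    ∃ i : ℕ, i < 3 ^ n ∧ p = ((i : ℚ) / 3 ^ n, ((i + 1 : ℕ) : ℚ) / 3 ^ n) := by
  induction n generalizing p with
  | zero =>
    rw [cantorStage, Set.mem_singleton_iff] at hp
    exact ⟨0, by norm_num, by simp [hp]⟩
  | succ n ih =>
    obtain ⟨q, hq, hp⟩ := hp
    obtain ⟨i, hi, rfl⟩ := ih hq
    have h3 : (3 : ℚ) ^ n ≠ 0 := by positivity
    rcases hp with rfl | rfl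
    · refine ⟨3 * i, by rw [pow_succ]; omega, ?_⟩
      simp only [Prod.mk.injEq]; push_cast; constructor <;> field_simp <;> ring
    · refine ⟨3 * i + 2, by rw [pow_succ]; omega, ?_⟩
      simp only [Prod.mk.injEq]; push_cast; constructor <;> field_simp <;> ring

theorem Cstar_subset_Vn (n : ℕ) : Cstar n ⊆ Vn n := by
  rintro x ⟨p, hp, hx⟩
  obtain ⟨i, hi, rfl⟩ := mem_cantorStage_s19 hp
  rcases hx with rfl | rfl
  · exact ⟨i, hi.le, rfl⟩
  · exact ⟨i + 1, hi, rfl⟩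

theorem Estar_subset_En {n : ℕ} (hn : 1 ≤ n) : Estar n ⊆ En n := by
  rintro e ⟨p, hp, he⟩
  obtain ⟨i, hi, rfl⟩ := mem_cantorStage_s19 hp
  obtain ⟨m, rfl⟩ : ∃ m, n = m + 1 := ⟨n - 1, by omega⟩
  have h3 : (3 : ℚ) ^ m ≠ 0 := by positivity
  refine ⟨i, hi, ?_⟩
  simp only [Nat.add_sub_cancel] at he ⊢
  rcases he with rfl | rfl | rfl <;> [left; (right; left); (right; right)] <;>
    congr 1 <;> push_cast <;> field_simp <;> ring

theorem Vn_subset_Icc (n : ℕ) : Vn n ⊆ Set.Icc 0 1 := by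
  rintro x ⟨i, hi, rfl⟩
  have h3 : (0 : ℚ) < 3 ^ n := by positivity
  exact ⟨by positivity, (div_le_one h3).2 (by exact_mod_cast hi)⟩

def ninthShift (c : ℕ) (x : ℚ) : ℚ := (x + c) / 9

theorem ninthShift_div_pow (c a m : ℕ) :
    ninthShift c ((a : ℚ) / 3 ^ m) = ((a + c * 3 ^ m : ℕ) : ℚ) / 3 ^ (m + 2) := by
  have h3 : (3 : ℚ) ^ m ≠ 0 := by positivity
  simp only [ninthShift]; push_cast; field_simp; ring

theorem ninthShift_mem_Vn {c n : ℕ} (hc : c ≤ 8) {x : ℚ} (hx : x ∈ Vn n) :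
    ninthShift c x ∈ Vn (n + 2) := by
  obtain ⟨i, hi, rfl⟩ := hx
  refine ⟨i + c * 3 ^ n, ?_, ninthShift_div_pow c i n⟩
  rw [pow_add]
  nlinarith

theorem map_ninthShift_mem_En {c n : ℕ} (hc : c ≤ 8) (hn : 1 ≤ n) {e : Sym2 ℚ}
    (he : e ∈ En n) : Sym2.map (ninthShift c) e ∈ En (n + 2) := by
  obtain ⟨m, rfl⟩ : ∃ m, n = m + 1 := ⟨n - 1, by omega⟩
  obtain ⟨k, hk, he⟩ := he
  simp only [Nat.add_sub_cancel] at hk he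
  have shift (r : ℕ) : ninthShift c (((3 * k + r : ℕ) : ℚ) / 3 ^ (m + 1)) =
      ((3 * (k + c * 3 ^ m) + r : ℕ) : ℚ) / 3 ^ (m + 1 + 2) := by
    rw [ninthShift_div_pow]; congr 2; ring
  have shift₀ := shift 0
  simp only [Nat.add_zero] at shift₀
  refine ⟨k + c * 3 ^ m, ?_, ?_⟩
  · rw [show m + 1 + 2 - 1 = m + 2 by omega, pow_add]
    nlinarith
  · rcases he with rfl | rfl | rfl <;> simp only [Sym2.map_mk, shift, shift₀, true_or, or_true]

theorem image_ninthShift_CstarU_subset_whirlV {c : ℕ} (hc : c ≤ 8) :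
    ninthShift c '' CstarU ⊆ whirlV := by
  rintro _ ⟨x, hx, rfl⟩
  simp only [CstarU, Set.mem_iUnion] at hx
  obtain ⟨n, hn, hx⟩ := hx
  exact Set.mem_biUnion (by omega : 1 ≤ n + 2) (ninthShift_mem_Vn hc (Cstar_subset_Vn n hx))

theorem image_map_ninthShift_EstarU_subset {c : ℕ} (hc : c ≤ 8) :
    Sym2.map (ninthShift c) '' EstarU ⊆ ⋃ n ≥ 1, En n := by
  rintro _ ⟨e, he, rfl⟩
  simp only [EstarU, Set.mem_iUnion] at he
  obtain ⟨n, hn, he⟩ := he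
  exact Set.mem_biUnion (by omega : 1 ≤ n + 2)
    (map_ninthShift_mem_En hc hn (Estar_subset_En hn he))

theorem image_ninthShift_CstarU_subset_Icc (c : ℕ) :
    ninthShift c '' CstarU ⊆ Set.Icc (c / 9) ((c + 1) / 9) := by
  rintro _ ⟨x, hx, rfl⟩
  simp only [CstarU, Set.mem_iUnion] at hx
  obtain ⟨n, -, hx⟩ := hx
  obtain ⟨hx₀, hx₁⟩ := Vn_subset_Icc n (Cstar_subset_Vn n hx)
  constructor <;> simp only [ninthShift] <;> linarith

theorem pi1_eq_ninthShift : pi1 = ninthShift 3 := by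
  funext x; simp only [pi1, ninthShift]; push_cast; ring

theorem pi2_eq_ninthShift : pi2 = ninthShift 5 := by
  funext x; simp only [pi2, ninthShift]; push_cast; ring

/-- The images `π₁G*` and `π₂G*` of `G* = (C*, E*)` are subgraphs of the whirl graph
(their vertices lie in `V` and their edges in `E`), and they are vertex-disjoint. -/
theorem stmt19 :
    SimpleGraph.fromEdgeSet (Sym2.map pi1 '' EstarU) ≤ whirl ∧
    SimpleGraph.fromEdgeSet (Sym2.map pi2 '' EstarU) ≤ whirl ∧
    pi1 '' CstarU ⊆ whirlV ∧
    pi2 '' CstarU ⊆ whirlV ∧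
    Disjoint (pi1 '' CstarU) (pi2 '' CstarU) := by
  rw [pi1_eq_ninthShift, pi2_eq_ninthShift]
  refine ⟨fromEdgeSet_mono (image_map_ninthShift_EstarU_subset (by norm_num)),
    fromEdgeSet_mono (image_map_ninthShift_EstarU_subset (by norm_num)),
    image_ninthShift_CstarU_subset_whirlV (by norm_num),
    image_ninthShift_CstarU_subset_whirlV (by norm_num), ?_⟩
  refine Set.disjoint_of_subset (image_ninthShift_CstarU_subset_Icc 3)
    (image_ninthShift_CstarU_subset_Icc 5) (Set.disjoint_left.2 fun x h₃ h₅ => ?_)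
  norm_num at h₃ h₅
  linarith [h₃.2, h₅.1]
end
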